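/- arXiv:1308.1241 — 6 statements merged into one kernel-verified Lean document; each statement's English description precedes it below -/
import Mathlib

section
/- Under assumptions (A3)–(A5) and Case (I), i.e. m^{β(1−γ)−1/2+γ}·|Δ_m| → 0 as m → ∞, the normalizing sequence satisfies a_m(c) = (σ c m^{1/2−γ}/|Δ_m|)^{1/(1−γ)}·(1 + o(1)), i.e. a_m(c)·(σ c m^{1/2−γ}/|Δ_m|)^{−1/(1−γ)} → 1 as m → ∞. -/
open MeasureTheory ProbabilityTheory Filter Finset Real Topology

noncomputable section

/-- The standard normal distribution function `Φ`. -/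
def stdNormalCDF (x : ℝ) : ℝ := ((gaussianReal 0 1) (Set.Iic x)).toReal

/-- A standard Wiener process (standard Brownian motion) on `[0,∞)`:
it starts at `0`, has almost surely continuous paths, independent increments, and
`W t - W s` is centered Gaussian with variance `t - s` for `0 ≤ s < t`. -/
def IsStandardWiener {Ω : Type*} [MeasurableSpace Ω] (P : Measure Ω)
    (W : ℝ → Ω → ℝ) : Prop :=
  (∀ᵐ ω ∂P, W 0 ω = 0) ∧
  (∀ᵐ ω ∂P, Continuous fun t => W t ω) ∧
  (∀ n : ℕ, ∀ t : Fin (n + 1) → ℝ, (∀ i, 0 ≤ t i) → StrictMono t →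
    iIndepFun
      (fun i : Fin n => fun ω => W (t i.succ) ω - W (t i.castSucc) ω) P) ∧
  (∀ s t : ℝ, 0 ≤ s → s < t →
    Measure.map (fun ω => W t ω - W s ω) P = gaussianReal 0 (t - s).toNNReal)

/-- The change point `k*_m = ⌊θ m^β⌋` from Assumption (A3). -/
def kstar (θ β : ℝ) (m : ℕ) : ℕ := ⌊θ * (m : ℝ) ^ β⌋₊

/-- The boundary function `g(m,k) = √m (1 + k/m) (k/(k+m))^γ`. -/
def gfun (γ : ℝ) (m k : ℕ) : ℝ :=
  Real.sqrt m * (1 + (k : ℝ) / m) * ((k : ℝ) / ((k : ℝ) + m)) ^ γ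

/-- The observations in the location model: `X_i = μ + ε_i` before the change at
time `m + k*_m`, and `X_i = μ + ε_i + Δ_m` from the change on. -/
def Xloc {Ω : Type*} (μ : ℝ) (ε : ℕ → Ω → ℝ) (Δ : ℕ → ℝ) (kst : ℕ → ℕ)
    (m i : ℕ) (ω : Ω) : ℝ :=
  if m + kst m ≤ i then μ + ε i ω + Δ m else μ + ε i ω

/-- The CUSUM detector `Q(m,k) = ∑_{i=m+1}^{m+k} X_i - (k/m) ∑_{i=1}^m X_i`. -/
def Qdet {Ω : Type*} (X : ℕ → ℕ → Ω → ℝ) (m k : ℕ) (ω : Ω) : ℝ :=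
  (∑ i ∈ Finset.Icc (m + 1) (m + k), X m i ω) -
    (k : ℝ) / m * ∑ i ∈ Finset.Icc 1 m, X m i ω

/-- The one-sided Page CUSUM detector `S₁(m,k) = Q(m,k) - min_{0 ≤ i ≤ k} Q(m,i)`. -/
def S1det {Ω : Type*} (X : ℕ → ℕ → Ω → ℝ) (m k : ℕ) (ω : Ω) : ℝ :=
  Qdet X m k ω -
    (Finset.Icc 0 k).inf' (Finset.nonempty_Icc.mpr (Nat.zero_le k))
      (fun i => Qdet X m i ω)

/-- The two-sided Page CUSUM detector `S₂(m,k) = max_{0 ≤ i ≤ k} |Q(m,k) - Q(m,i)|`. -/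
def S2det {Ω : Type*} (X : ℕ → ℕ → Ω → ℝ) (m k : ℕ) (ω : Ω) : ℝ :=
  (Finset.Icc 0 k).sup' (Finset.nonempty_Icc.mpr (Nat.zero_le k))
    (fun i => |Qdet X m k ω - Qdet X m i ω|)

/-- The set of times `k ≥ 1` at which a detector `D` exceeds the boundary
`σ̂_m c g(m,k)`; the stopping time is finite iff this set is nonempty, in which
case it equals the infimum of this set. -/
def hitSet {Ω : Type*} (D : ℕ → ℕ → Ω → ℝ) (σhat : ℕ → Ω → ℝ) (c γ : ℝ)
    (m : ℕ) (ω : Ω) : Set ℕ :=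
  {k : ℕ | 1 ≤ k ∧ σhat m ω * c * gfun γ m k ≤ D m k ω}

/-- The normalizing sequence `b_m(c)`. -/
def bseq (σ γ : ℝ) (Δ : ℕ → ℝ) (kst : ℕ → ℕ) (a : ℕ → ℝ) (m : ℕ) : ℝ :=
  σ * Real.sqrt (a m) * |Δ m|⁻¹ * (1 - γ * (1 - (kst m : ℝ) / a m))⁻¹

/-- The sequence `N(m,x)` used in the proofs. -/
def Nseq (σ c γ : ℝ) (Δ : ℕ → ℝ) (kst : ℕ → ℕ) (a : ℕ → ℝ) (x : ℝ) (m : ℕ) : ℝ :=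
  (σ * c * (m : ℝ) ^ ((1 : ℝ) / 2 - γ) / Δ m + (kst m : ℝ) / a m ^ γ -
      σ * x * a m ^ ((1 : ℝ) / 2 - γ) * (1 - γ) /
        (Δ m * (1 - γ * (1 - (kst m : ℝ) / a m)))) ^ ((1 : ℝ) / (1 - γ))

/-- The drifted Wiener process `W_Δ(j) = σ W_m(j) + (j - k* + 1) Δ_m 1{j ≥ k*}`. -/
def Wdrift {Ω : Type*} (σ : ℝ) (W : ℕ → ℝ → Ω → ℝ) (Δ : ℕ → ℝ) (kst : ℕ → ℕ)
    (m j : ℕ) (ω : Ω) : ℝ :=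
  σ * W m (j : ℝ) ω +
    (if kst m ≤ j then ((j : ℝ) - (kst m : ℝ) + 1) * Δ m else 0)

/-- The Wiener counterpart `P_W(m,k) = W_Δ(k) - min_{0 ≤ i ≤ k} W_Δ(i)` of the
Page CUSUM detector. -/
def PWdet {Ω : Type*} (σ : ℝ) (W : ℕ → ℝ → Ω → ℝ) (Δ : ℕ → ℝ) (kst : ℕ → ℕ)
    (m k : ℕ) (ω : Ω) : ℝ :=
  Wdrift σ W Δ kst m k ω -
    (Finset.Icc 0 k).inf' (Finset.nonempty_Icc.mpr (Nat.zero_le k))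
      (fun i => Wdrift σ W Δ kst m i ω)

/-!
Put `r_m = σ c m^{1/2-γ}/|Δ_m|` and `p = 1/(1-γ)`. Since `r_m · r_m^{-pγ} = r_m^{-p}`, the
rescaled root `u_m = a_m r_m^{-p}` solves `u = u^γ + ε_m` with `ε_m = k*_m r_m^{-p} ≥ 0`.
Every positive solution of this equation lies in `[1, 1 + ε/(1-γ)]`: below `1` we would have
`u^γ > u`, and the weighted AM-GM inequality `u^γ ≤ γ u + (1-γ)` gives the upper bound.
Finally `ε_m ≤ θ m^β r_m^{-p} = θ (σc)^{-p} (m^{β(1-γ)-1/2+γ} |Δ_m|)^p`, which tends to `0`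
in Case (I).
-/

theorem one_le_of_eq_rpow_add {u ε γ : ℝ} (hγ : γ < 1) (hu : 0 < u) (hε : 0 ≤ ε)
    (h : u = u ^ γ + ε) : 1 ≤ u := by
  by_contra! hlt
  have : u ^ (1 : ℝ) < u ^ γ := Real.rpow_lt_rpow_of_exponent_gt hu hlt hγ
  rw [Real.rpow_one] at this
  linarith

theorem le_one_add_div_of_eq_rpow_add {u ε γ : ℝ} (hγ0 : 0 ≤ γ) (hγ1 : γ < 1) (hu : 0 ≤ u)
    (h : u = u ^ γ + ε) : u ≤ 1 + ε / (1 - γ) := by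
  have amgm : u ^ γ ≤ γ * u + (1 - γ) := by
    simpa using Real.geom_mean_le_arith_mean2_weighted hγ0 (by linarith) hu zero_le_one
      (add_sub_cancel γ 1)
  have hpos : 0 < 1 - γ := by linarith
  rw [one_add_div hpos.ne', le_div_iff₀ hpos]
  linarith

theorem tendsto_nhds_one_of_eq_rpow_add {ι : Type*} {l : Filter ι} {u ε : ι → ℝ} {γ : ℝ}
    (hγ0 : 0 ≤ γ) (hγ1 : γ < 1) (hε : Tendsto ε l (𝓝 0))
    (hu : ∀ᶠ i in l, 0 < u i ∧ 0 ≤ ε i ∧ u i = u i ^ γ + ε i) :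
    Tendsto u l (𝓝 1) := by
  have upper : Tendsto (fun i => 1 + ε i / (1 - γ)) l (𝓝 1) := by
    simpa using (hε.div_const (1 - γ)).const_add 1
  refine tendsto_of_tendsto_of_tendsto_of_le_of_le' tendsto_const_nhds upper ?_ ?_
  · filter_upwards [hu] with i ⟨hui, hεi, h⟩ using one_le_of_eq_rpow_add hγ1 hui hεi h
  · filter_upwards [hu] with i ⟨hui, _, h⟩ using le_one_add_div_of_eq_rpow_add hγ0 hγ1 hui.le h

theorem mul_rpow_neg_eq_rpow_add {a r k γ : ℝ} (hγ : γ ≠ 1) (ha : 0 ≤ a) (hr : 0 < r)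
    (h : a = r * a ^ γ + k) :
    a * r ^ (-(1 / (1 - γ))) =
      (a * r ^ (-(1 / (1 - γ)))) ^ γ + k * r ^ (-(1 / (1 - γ))) := by
  have hscale : (r ^ (-(1 / (1 - γ)))) ^ γ = r * r ^ (-(1 / (1 - γ))) := by
    rw [← Real.rpow_mul hr.le, mul_comm r, ← Real.rpow_add_one hr.ne']
    congr 1
    field_simp [sub_ne_zero.mpr hγ.symm]
    ring
  rw [Real.mul_rpow ha (Real.rpow_nonneg hr.le _), hscale]
  nth_rewrite 1 [h]
  ring

theorem rpow_mul_div_rpow_neg {x y K : ℝ} (hx : 0 < x) (hy : 0 < y) (hK : 0 < K) (d e p : ℝ) :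
    x ^ ((e + d) * p) * (K * x ^ d / y) ^ (-p) = K ^ (-p) * (x ^ e * y) ^ p := by
  rw [mul_div_assoc, Real.mul_rpow hK.le (by positivity), Real.div_rpow (by positivity) hy.le,
    Real.mul_rpow (by positivity) hy.le, ← Real.rpow_mul hx.le, ← Real.rpow_mul hx.le,
    Real.rpow_neg hy.le, add_mul, Real.rpow_add hx]
  field_simp
  simp [← Real.rpow_add hx]

theorem kstar_le_mul_rpow {θ β : ℝ} (hθ : 0 ≤ θ) (m : ℕ) :
    (kstar θ β m : ℝ) ≤ θ * (m : ℝ) ^ β :=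
  Nat.floor_le (by positivity)

theorem aseq_asymptotics_caseI_general
    (σ c θ β γ : ℝ) (Δ : ℕ → ℝ) (a : ℕ → ℝ)
    (hγ : γ ∈ Set.Ico (0 : ℝ) (1 / 2)) (hσ : 0 < σ) (hc : 0 < c) (hθ : 0 < θ)
    (hΔne : ∀ m : ℕ, Δ m ≠ 0)
    (ha : ∀ m : ℕ, 0 < a m ∧
      a m = σ * c * (m : ℝ) ^ ((1 : ℝ) / 2 - γ) * |Δ m|⁻¹ * a m ^ γ + (kstar θ β m : ℝ))
    (hcaseI : Tendsto (fun m : ℕ => (m : ℝ) ^ (β * (1 - γ) - 1 / 2 + γ) * |Δ m|) atTop (𝓝 0))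
    :
    Tendsto (fun m : ℕ =>
        a m * (σ * c * (m : ℝ) ^ ((1 : ℝ) / 2 - γ) / |Δ m|) ^ (-(1 / (1 - γ))))
      atTop (𝓝 1) := by
  obtain ⟨hγ0, hγ1⟩ := hγ
  set p := 1 / (1 - γ) with hp
  have hp0 : 0 < p := by rw [hp]; exact one_div_pos.mpr (by linarith)
  set r : ℕ → ℝ := fun m => σ * c * (m : ℝ) ^ ((1 : ℝ) / 2 - γ) / |Δ m| with hr
  have hr0 : ∀ m : ℕ, 1 ≤ m → 0 < r m := fun m hm => by
    have : (0 : ℝ) < m := by exact_mod_cast hm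
    have := abs_pos.mpr (hΔne m)
    positivity
  have hε : Tendsto (fun m => (kstar θ β m : ℝ) * r m ^ (-p)) atTop (𝓝 0) := by
    have hβp : (β * (1 - γ) - 1 / 2 + γ + (1 / 2 - γ)) * p = β := by
      rw [hp]; field_simp [(by linarith : (1 : ℝ) - γ ≠ 0)]; ring
    have hbound := (hcaseI.rpow_const (Or.inr hp0.le)).const_mul (θ * (σ * c) ^ (-p))
    rw [Real.zero_rpow hp0.ne', mul_zero] at hbound
    refine squeeze_zero' (Eventually.of_forall fun m => by positivity) ?_ hbound
    filter_upwards [eventually_ge_atTop 1] with m hm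
    calc (kstar θ β m : ℝ) * r m ^ (-p) ≤ θ * (m : ℝ) ^ β * r m ^ (-p) := by
          gcongr; exact kstar_le_mul_rpow hθ.le m
      _ = θ * (σ * c) ^ (-p) * ((m : ℝ) ^ (β * (1 - γ) - 1 / 2 + γ) * |Δ m|) ^ p := by
          rw [mul_assoc θ ((σ * c) ^ (-p)), ← rpow_mul_div_rpow_neg (by exact_mod_cast hm)
            (abs_pos.mpr (hΔne m)) (by positivity) (1 / 2 - γ), hβp, mul_assoc]
  refine tendsto_nhds_one_of_eq_rpow_add hγ0 (by linarith) hε ?_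
  filter_upwards [eventually_ge_atTop 1] with m hm
  obtain ⟨ham, haeq⟩ := ha m
  refine ⟨mul_pos ham (Real.rpow_pos_of_pos (hr0 m hm) _), by positivity,
    mul_rpow_neg_eq_rpow_add (by linarith) ham.le (hr0 m hm) ?_⟩
  simpa only [hr, div_eq_mul_inv] using haeq

/-- Proposition A.1, Case (I): `a_m(c) ≈ (σ c m^{1/2-γ}/|Δ_m|)^{1/(1-γ)}`. -/
theorem aseq_asymptotics_caseI
    (σ c θ β γ : ℝ) (Δ : ℕ → ℝ) (a : ℕ → ℝ)
    (hγ : γ ∈ Set.Ico (0 : ℝ) (1 / 2)) (hσ : 0 < σ) (hc : 0 < c) (hθ : 0 < θ)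
    (hβ : β ∈ Set.Ico (0 : ℝ) 1)
    (hΔne : ∀ m : ℕ, Δ m ≠ 0)
    (hA4 : Tendsto (fun m : ℕ => Real.sqrt m * |Δ m|) atTop atTop)
    (hA5 : ∃ M : ℝ, ∀ m : ℕ, |Δ m| ≤ M)
    (ha : ∀ m : ℕ, 0 < a m ∧
      a m = σ * c * (m : ℝ) ^ ((1 : ℝ) / 2 - γ) * |Δ m|⁻¹ * a m ^ γ + (kstar θ β m : ℝ))
    (hcaseI : Tendsto (fun m : ℕ => (m : ℝ) ^ (β * (1 - γ) - 1 / 2 + γ) * |Δ m|) atTop (𝓝 0))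
    :
    Tendsto (fun m : ℕ =>
        a m * (σ * c * (m : ℝ) ^ ((1 : ℝ) / 2 - γ) / |Δ m|) ^ (-(1 / (1 - γ))))
      atTop (𝓝 1) :=
  aseq_asymptotics_caseI_general σ c θ β γ Δ a hγ hσ hc hθ hΔne ha hcaseI

end
end

section
/- Under assumptions (A3)–(A5) and Case (II), i.e. m^{β(1−γ)−1/2+γ}·|Δ_m| → C̃₁ for some C̃₁ ∈ (0,∞), set C₁ = θ^{1−γ}·C̃₁, let d₁ ∈ (0,1) be the unique solution of d₁ = 1 − (cσ/C₁)·d₁^{1−γ}, and set d₂ = (σc/C₁ + d₁^γ)^{1/(1−γ)}. Then a_m(c) = d₂·k*_m·(1 + o(1)), i.e. a_m(c)/(d₂·k*_m) → 1 as m → ∞. -/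
open MeasureTheory ProbabilityTheory Filter Finset Real Topology

noncomputable section

/-! Writing `t_m = a_m / k*_m`, the defining equation of `a_m(c)` becomes `g(t_m) = ε_m` for the
strictly increasing `g(t) = t^(1-γ) - t^(-γ)` on `(0, ∞)`, with
`ε_m = σ c m^(1/2-γ) |Δ_m|⁻¹ (k*_m)^(γ-1)`. Since `k*_m ~ θ m^β`, Case (II) gives
`ε_m → σc/C₁`, and the equation for `d₁` says exactly that `d₂ = 1/d₁` and `g(d₂) = σc/C₁`;
inverting `g` yields `t_m → d₂`. Boundedness of `Δ` forces `β > 0` (for `β = 0` the Case (II)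
sequence would tend to `0`), which is what makes `k*_m → ∞`. -/

theorem StrictMonoOn.tendsto_of_tendsto_comp {α β ι : Type*} [LinearOrder α]
    [TopologicalSpace α] [OrderTopology α] [DenselyOrdered α] [LinearOrder β]
    [TopologicalSpace β] [OrderTopology β] {f : α → β} {s : Set α} {u : ι → α}
    {l : Filter ι} {x : α} (hf : StrictMonoOn f s) (hs : s ∈ 𝓝 x)
    (hu : ∀ᶠ i in l, u i ∈ s) (hfu : Tendsto (fun i => f (u i)) l (𝓝 (f x))) :
    Tendsto u l (𝓝 x) := by
  have hx : x ∈ s := mem_of_mem_nhds hs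
  refine tendsto_order.2 ⟨fun y hy => ?_, fun y hy => ?_⟩
  · obtain ⟨y', hy', hsub⟩ := exists_Ioc_subset_of_mem_nhds' hs hy
    obtain ⟨z, hy'z, hzx⟩ := exists_between hy'.2
    have hz : z ∈ s := hsub ⟨hy'z, hzx.le⟩
    filter_upwards [hu, (tendsto_order.1 hfu).1 _ (hf hz hx hzx)] with i hi hfi
    exact hy'.1.trans_lt (hy'z.trans ((hf.lt_iff_lt hz hi).1 hfi))
  · obtain ⟨y', hy', hsub⟩ := exists_Ico_subset_of_mem_nhds' hs hy
    obtain ⟨z, hxz, hzy'⟩ := exists_between hy'.1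
    have hz : z ∈ s := hsub ⟨hxz.le, hzy'⟩
    filter_upwards [hu, (tendsto_order.1 hfu).2 _ (hf hx hz hxz)] with i hi hfi
    exact ((hf.lt_iff_lt hi hz).1 hfi).trans (hzy'.trans_le hy'.2)

section RpowGap

variable {γ : ℝ}

theorem rpow_one_sub_sub_rpow_neg_mul_rpow {x : ℝ} (hx : 0 < x) :
    (x ^ (1 - γ) - x ^ (-γ)) * x ^ γ = x - 1 := by
  rw [sub_mul, ← rpow_add hx, ← rpow_add hx, sub_add_cancel, neg_add_cancel, rpow_one,
    rpow_zero]

theorem strictMonoOn_rpow_one_sub_sub_rpow_neg (hγ0 : 0 ≤ γ) (hγ1 : γ < 1) :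
    StrictMonoOn (fun x : ℝ => x ^ (1 - γ) - x ^ (-γ)) (Set.Ioi 0) := by
  intro x hx y _ hxy
  have h1 : x ^ (1 - γ) < y ^ (1 - γ) := rpow_lt_rpow hx.le hxy (by linarith)
  have h2 : y ^ (-γ) ≤ x ^ (-γ) := rpow_le_rpow_of_nonpos hx hxy.le (by linarith)
  dsimp only
  linarith

theorem rpow_one_sub_sub_rpow_neg_div_of_eq {A K L : ℝ} (hA : 0 < A) (hK : 0 < K)
    (heq : A = L * A ^ γ + K) :
    (A / K) ^ (1 - γ) - (A / K) ^ (-γ) = L * K ^ (γ - 1) := by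
  have ht : 0 < A / K := div_pos hA hK
  refine mul_right_cancel₀ (rpow_pos_of_pos ht γ).ne' ?_
  rw [rpow_one_sub_sub_rpow_neg_mul_rpow ht, div_rpow hA.le hK.le, rpow_sub hK, rpow_one]
  have := (rpow_pos_of_pos hK γ).ne'
  field_simp
  linear_combination heq

theorem rpow_sub_one_eq_add_rpow_of_eq {d r : ℝ} (hd : 0 < d)
    (h : d = 1 - r * d ^ (1 - γ)) : d ^ (γ - 1) = r + d ^ γ := by
  have hd' : d ^ (γ - 1) * d = d ^ γ := by
    rw [← rpow_add_one hd.ne', sub_add_cancel]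
  have hinv : d ^ (γ - 1) * d ^ (1 - γ) = 1 := by
    rw [← rpow_add hd, show γ - 1 + (1 - γ) = 0 by ring, rpow_zero]
  linear_combination (-(d ^ (γ - 1))) * h + hd' + r * hinv

theorem rpow_one_sub_sub_rpow_neg_inv_of_eq {d r : ℝ} (hd : 0 < d)
    (h : d = 1 - r * d ^ (1 - γ)) : d⁻¹ ^ (1 - γ) - d⁻¹ ^ (-γ) = r := by
  rw [inv_rpow hd.le, inv_rpow hd.le, ← rpow_neg hd.le, ← rpow_neg hd.le, neg_neg, neg_sub,
    rpow_sub_one_eq_add_rpow_of_eq hd h, add_sub_cancel_right]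

theorem add_rpow_rpow_inv_one_sub_of_eq {d r : ℝ} (hγ1 : γ < 1) (hd : 0 < d)
    (h : d = 1 - r * d ^ (1 - γ)) : (r + d ^ γ) ^ ((1 : ℝ) / (1 - γ)) = d⁻¹ := by
  have : 1 - γ ≠ 0 := by linarith
  rw [← rpow_sub_one_eq_add_rpow_of_eq hd h, ← rpow_mul hd.le,
    show (γ - 1) * (1 / (1 - γ)) = -1 by field_simp; ring, rpow_neg_one]

end RpowGap

theorem nonneg_of_tendsto_rpow_mul {p C : ℝ} {x : ℕ → ℝ} (hC : C ≠ 0)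
    (hx : ∃ M : ℝ, ∀ m : ℕ, |x m| ≤ M)
    (hlim : Tendsto (fun m : ℕ => (m : ℝ) ^ p * x m) atTop (𝓝 C)) : 0 ≤ p := by
  by_contra! hp
  obtain ⟨M, hM⟩ := hx
  have hzero : Tendsto (fun m : ℕ => (m : ℝ) ^ p * x m) atTop (𝓝 0) := by
    have hpow := (tendsto_rpow_neg_atTop (neg_pos.2 hp)).comp tendsto_natCast_atTop_atTop
    rw [neg_neg] at hpow
    exact hpow.zero_mul_isBoundedUnder_le ⟨M, eventually_map.2 (Eventually.of_forall hM)⟩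
  exact hC (tendsto_nhds_unique hlim hzero)

section Kstar

variable {θ β : ℝ}

theorem tendsto_kstar_atTop (hθ : 0 < θ) (hβ : 0 < β) :
    Tendsto (kstar θ β) atTop atTop :=
  tendsto_nat_floor_atTop.comp
    (((tendsto_rpow_atTop hβ).comp tendsto_natCast_atTop_atTop).const_mul_atTop hθ)

theorem tendsto_kstar_div (hθ : 0 < θ) (hβ : 0 < β) :
    Tendsto (fun m : ℕ => (kstar θ β m : ℝ) / (θ * (m : ℝ) ^ β)) atTop (𝓝 1) :=
  tendsto_nat_floor_div_atTop.comp
    (((tendsto_rpow_atTop hβ).comp tendsto_natCast_atTop_atTop).const_mul_atTop hθ)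

end Kstar

theorem rpow_mul_inv_mul_rpow_eq {m k θ β γ D : ℝ} (hm : 0 < m) (hk : 0 < k) (hθ : 0 < θ) :
    m ^ ((1 : ℝ) / 2 - γ) * D⁻¹ * k ^ (γ - 1) =
      (m ^ (β * (1 - γ) - 1 / 2 + γ) * D)⁻¹ * (k / (θ * m ^ β)) ^ (γ - 1) * θ ^ (γ - 1) := by
  have hmβ := rpow_pos_of_pos hm β
  rw [div_rpow hk.le (by positivity), mul_rpow hθ.le hmβ.le, ← rpow_mul hm.le,
    show (1 : ℝ) / 2 - γ = -(β * (1 - γ) - 1 / 2 + γ) - β * (γ - 1) by ring,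
    rpow_sub hm, rpow_neg hm.le]
  have := (rpow_pos_of_pos hθ (γ - 1)).ne'
  have := (rpow_pos_of_pos hm (β * (1 - γ) - 1 / 2 + γ)).ne'
  have := (rpow_pos_of_pos hm (β * (γ - 1))).ne'
  field_simp

theorem tendsto_caseII_rate {σ c θ β γ Ct1 : ℝ} {Δ : ℕ → ℝ} (hθ : 0 < θ) (hβ : 0 < β)
    (hCt1 : 0 < Ct1)
    (hcaseII : Tendsto (fun m : ℕ => (m : ℝ) ^ (β * (1 - γ) - 1 / 2 + γ) * |Δ m|) atTop
      (𝓝 Ct1)) :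
    Tendsto (fun m : ℕ => σ * c * (m : ℝ) ^ ((1 : ℝ) / 2 - γ) * |Δ m|⁻¹ *
      (kstar θ β m : ℝ) ^ (γ - 1)) atTop (𝓝 (σ * c / (θ ^ (1 - γ) * Ct1))) := by
  have hlim := (((hcaseII.inv₀ hCt1.ne').mul ((tendsto_kstar_div hθ hβ).rpow_const
    (p := γ - 1) (Or.inl one_ne_zero))).mul_const (θ ^ (γ - 1))).const_mul (σ * c)
  have hval : σ * c * (Ct1⁻¹ * 1 ^ (γ - 1) * θ ^ (γ - 1)) = σ * c / (θ ^ (1 - γ) * Ct1) := by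
    rw [one_rpow, show γ - 1 = -(1 - γ) by ring, rpow_neg hθ.le]
    field_simp
  rw [hval] at hlim
  refine hlim.congr' ?_
  filter_upwards [(tendsto_kstar_atTop hθ hβ).eventually_ge_atTop 1, eventually_ge_atTop 1]
    with m hk hm
  linear_combination (-(σ * c)) * rpow_mul_inv_mul_rpow_eq (β := β) (D := |Δ m|)
    (by exact_mod_cast hm : (0 : ℝ) < m) (by exact_mod_cast hk : (0 : ℝ) < kstar θ β m) hθ

theorem aseq_asymptotics_caseII_general
    (σ c θ β γ : ℝ) (Δ : ℕ → ℝ) (a : ℕ → ℝ)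
    (hγ : γ ∈ Set.Ico (0 : ℝ) (1 / 2)) (hθ : 0 < θ)
    (hβ : β ∈ Set.Ico (0 : ℝ) 1)
    (hA5 : ∃ M : ℝ, ∀ m : ℕ, |Δ m| ≤ M)
    (ha : ∀ m : ℕ, 0 < a m ∧
      a m = σ * c * (m : ℝ) ^ ((1 : ℝ) / 2 - γ) * |Δ m|⁻¹ * a m ^ γ + (kstar θ β m : ℝ))
    (Ct1 : ℝ) (hCt1 : 0 < Ct1)
    (hcaseII : Tendsto (fun m : ℕ => (m : ℝ) ^ (β * (1 - γ) - 1 / 2 + γ) * |Δ m|) atTop (𝓝 Ct1))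
    (C1 : ℝ) (hC1 : C1 = θ ^ (1 - γ) * Ct1)
    (d1 : ℝ) (hd1 : d1 ∈ Set.Ioo (0 : ℝ) 1)
    (hd1eq : d1 = 1 - c * σ / C1 * d1 ^ (1 - γ))
    (d2 : ℝ) (hd2 : d2 = (σ * c / C1 + d1 ^ γ) ^ ((1 : ℝ) / (1 - γ))) :
    Tendsto (fun m : ℕ => a m / (d2 * (kstar θ β m : ℝ))) atTop (𝓝 1) := by
  obtain ⟨hγ0, hγ12⟩ := hγ
  have hβpos : 0 < β := by
    have := nonneg_of_tendsto_rpow_mul hCt1.ne' (by simpa only [abs_abs] using hA5) hcaseII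
    nlinarith [hβ.1]
  have hd1eq' : d1 = 1 - σ * c / C1 * d1 ^ (1 - γ) := by rw [mul_comm σ]; exact hd1eq
  replace hd2 : d2 = d1⁻¹ :=
    hd2.trans (add_rpow_rpow_inv_one_sub_of_eq (by linarith) hd1.1 hd1eq')
  have hd2pos : 0 < d2 := hd2 ▸ inv_pos.2 hd1.1
  have hk := (tendsto_kstar_atTop hθ hβpos).eventually_ge_atTop 1
  have hgap : Tendsto (fun m => (a m / kstar θ β m) ^ (1 - γ) - (a m / kstar θ β m) ^ (-γ))
      atTop (𝓝 (d2 ^ (1 - γ) - d2 ^ (-γ))) := by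
    rw [hd2, rpow_one_sub_sub_rpow_neg_inv_of_eq hd1.1 hd1eq', hC1]
    refine (tendsto_caseII_rate hθ hβpos hCt1 hcaseII).congr' ?_
    filter_upwards [hk] with m hkm
    exact (rpow_one_sub_sub_rpow_neg_div_of_eq (ha m).1 (by exact_mod_cast hkm) (ha m).2).symm
  have hratio : Tendsto (fun m => a m / kstar θ β m) atTop (𝓝 d2) :=
    (strictMonoOn_rpow_one_sub_sub_rpow_neg hγ0 (by linarith)).tendsto_of_tendsto_comp
      (Ioi_mem_nhds hd2pos) (hk.mono fun m hkm => div_pos (ha m).1 (by exact_mod_cast hkm)) hgap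
  rw [← div_self hd2pos.ne']
  refine (hratio.div_const d2).congr fun m => ?_
  rw [div_div, mul_comm]

/-- Proposition A.1, Case (II): `a_m(c) ≈ d₂ k*_m`. -/
theorem aseq_asymptotics_caseII
    (σ c θ β γ : ℝ) (Δ : ℕ → ℝ) (a : ℕ → ℝ)
    (hγ : γ ∈ Set.Ico (0 : ℝ) (1 / 2)) (hσ : 0 < σ) (hc : 0 < c) (hθ : 0 < θ)
    (hβ : β ∈ Set.Ico (0 : ℝ) 1)
    (hΔne : ∀ m : ℕ, Δ m ≠ 0)
    (hA4 : Tendsto (fun m : ℕ => Real.sqrt m * |Δ m|) atTop atTop)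
    (hA5 : ∃ M : ℝ, ∀ m : ℕ, |Δ m| ≤ M)
    (ha : ∀ m : ℕ, 0 < a m ∧
      a m = σ * c * (m : ℝ) ^ ((1 : ℝ) / 2 - γ) * |Δ m|⁻¹ * a m ^ γ + (kstar θ β m : ℝ))
    (Ct1 : ℝ) (hCt1 : 0 < Ct1)
    (hcaseII : Tendsto (fun m : ℕ => (m : ℝ) ^ (β * (1 - γ) - 1 / 2 + γ) * |Δ m|) atTop (𝓝 Ct1))
    (C1 : ℝ) (hC1 : C1 = θ ^ (1 - γ) * Ct1)
    (d1 : ℝ) (hd1 : d1 ∈ Set.Ioo (0 : ℝ) 1)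
    (hd1eq : d1 = 1 - c * σ / C1 * d1 ^ (1 - γ))
    (d2 : ℝ) (hd2 : d2 = (σ * c / C1 + d1 ^ γ) ^ ((1 : ℝ) / (1 - γ))) :
    Tendsto (fun m : ℕ => a m / (d2 * (kstar θ β m : ℝ))) atTop (𝓝 1) :=
  aseq_asymptotics_caseII_general σ c θ β γ Δ a hγ hθ hβ hA5 ha Ct1 hCt1 hcaseII C1 hC1 d1 hd1 hd1eq
    d2 hd2

end
end

section
/- Under assumptions (A3)–(A5) and γ ∈ [0,1/2), the normalizing sequence satisfies a_m(c)/m → 0 as m → ∞. -/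
open MeasureTheory ProbabilityTheory Filter Finset Real Topology

noncomputable section

/-! Write `u_m = a_m / m`. Dividing the defining equation of `a_m` by `m` gives
`u_m = d_m u_m^γ + k*_m / m` with `d_m = σ c / (√m |Δ_m|)`, and both `d_m → 0` (by (A4)) and
`k*_m / m → 0` (by (A3)). Since `γ ≤ 1`, the middle term is absorbed: if `u ≥ x > 0` then
`d u^γ ≤ d x^(γ-1) u ≤ u / 2` once `d` is small, so `u ≤ 2 k*_m / m < x` once `k*_m / m` is small. -/

theorem lt_of_le_mul_rpow_add {a b k x γ : ℝ} (ha : 0 < a) (hx : 0 < x) (hγ : γ ≤ 1)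
    (hb : 0 ≤ b) (hbx : 2 * (b * x ^ (γ - 1)) ≤ 1) (hk : 2 * k < x)
    (h : a ≤ b * a ^ γ + k) : a < x := by
  by_contra! hxa
  have hpow : a ^ γ ≤ x ^ (γ - 1) * a :=
    calc a ^ γ = a ^ (γ - 1) * a := by rw [← rpow_add_one ha.ne']; ring_nf
      _ ≤ x ^ (γ - 1) * a :=
        mul_le_mul_of_nonneg_right (rpow_le_rpow_of_nonpos hx hxa (by linarith)) ha.le
  nlinarith [mul_le_mul_of_nonneg_left hpow hb]

theorem tendsto_zero_of_le_mul_rpow_add {ι : Type*} {l : Filter ι} {u d r : ι → ℝ} {γ : ℝ}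
    (hγ : γ ≤ 1) (hu : ∀ᶠ i in l, 0 < u i) (hd₀ : ∀ᶠ i in l, 0 ≤ d i)
    (hd : Tendsto d l (𝓝 0)) (hr : Tendsto r l (𝓝 0))
    (h : ∀ᶠ i in l, u i ≤ d i * u i ^ γ + r i) : Tendsto u l (𝓝 0) := by
  refine tendsto_order.2 ⟨fun e he => hu.mono fun i hi => he.trans hi, fun x hx => ?_⟩
  have hdx : ∀ᶠ i in l, 2 * (d i * x ^ (γ - 1)) < 1 := by
    have := (hd.mul_const (x ^ (γ - 1))).const_mul 2
    rw [zero_mul, mul_zero] at this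
    exact this.eventually (gt_mem_nhds one_pos)
  have hrx : ∀ᶠ i in l, 2 * r i < x := by
    have := hr.const_mul 2
    rw [mul_zero] at this
    exact this.eventually (gt_mem_nhds hx)
  filter_upwards [hu, hd₀, hdx, hrx, h] with i hui hdi hdxi hrxi hi
  exact lt_of_le_mul_rpow_add hui hx hγ hdi hdxi.le hrxi hi

theorem tendsto_kstar_div_atTop_nhds_zero {θ β : ℝ} (hθ : 0 ≤ θ) (hβ : β < 1) :
    Tendsto (fun m : ℕ => (kstar θ β m : ℝ) / m) atTop (𝓝 0) := by
  have hlim : Tendsto (fun m : ℕ => θ * (m : ℝ) ^ (β - 1)) atTop (𝓝 0) := by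
    have := (tendsto_rpow_neg_atTop (sub_pos.2 hβ)).comp tendsto_natCast_atTop_atTop
    simpa [Function.comp_def, neg_sub] using this.const_mul θ
  refine squeeze_zero' (Eventually.of_forall fun m => by positivity) ?_ hlim
  filter_upwards [eventually_gt_atTop 0] with m hm
  have hm' : (0 : ℝ) < m := Nat.cast_pos.2 hm
  calc (kstar θ β m : ℝ) / m ≤ θ * (m : ℝ) ^ β / m := by
        gcongr; exact Nat.floor_le (by positivity)
    _ = θ * (m : ℝ) ^ (β - 1) := by rw [rpow_sub_one hm'.ne']; ring

theorem rpow_one_half_sub_mul_rpow_div {m a γ : ℝ} (hm : 0 < m) (ha : 0 ≤ a) :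
    m ^ ((1 : ℝ) / 2 - γ) * a ^ γ / m = (a / m) ^ γ / √m := by
  rw [div_rpow ha hm.le, rpow_sub hm, ← sqrt_eq_rpow]
  field_simp
  rw [sq_sqrt hm.le, mul_comm]

theorem aseq_div_m_tendsto_zero_general
    (σ c θ β γ : ℝ) (Δ : ℕ → ℝ) (a : ℕ → ℝ)
    (hγ : γ ∈ Set.Ico (0 : ℝ) (1 / 2)) (hσ : 0 < σ) (hc : 0 < c) (hθ : 0 < θ)
    (hβ : β ∈ Set.Ico (0 : ℝ) 1)
    (hA4 : Tendsto (fun m : ℕ => Real.sqrt m * |Δ m|) atTop atTop)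
    (ha : ∀ m : ℕ, 0 < a m ∧
      a m = σ * c * (m : ℝ) ^ ((1 : ℝ) / 2 - γ) * |Δ m|⁻¹ * a m ^ γ + (kstar θ β m : ℝ))
    :
    Tendsto (fun m : ℕ => a m / m) atTop (𝓝 0) := by
  have hd : Tendsto (fun m : ℕ => σ * c / (√m * |Δ m|)) atTop (𝓝 0) := by
    simpa only [div_eq_mul_inv, mul_zero, Pi.inv_apply] using
      hA4.inv_tendsto_atTop.const_mul (σ * c)
  refine tendsto_zero_of_le_mul_rpow_add (γ := γ) (by linarith [hγ.2]) ?_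
    (Eventually.of_forall fun m => by positivity) hd
    (tendsto_kstar_div_atTop_nhds_zero hθ.le hβ.2) ?_
  · filter_upwards [eventually_gt_atTop 0] with m hm
    exact div_pos (ha m).1 (Nat.cast_pos.2 hm)
  · filter_upwards [eventually_gt_atTop 0] with m hm
    have hm' : (0 : ℝ) < m := Nat.cast_pos.2 hm
    refine le_of_eq ?_
    calc a m / m = σ * c * |Δ m|⁻¹ * ((m : ℝ) ^ ((1 : ℝ) / 2 - γ) * a m ^ γ / m)
          + kstar θ β m / m := by
          conv_lhs => rw [(ha m).2]
          ring
      _ = _ := by rw [rpow_one_half_sub_mul_rpow_div hm' (ha m).1.le]; ring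

/-- Lemma A.1 a) (i): `a_m(c)/m → 0`. -/
theorem aseq_div_m_tendsto_zero
    (σ c θ β γ : ℝ) (Δ : ℕ → ℝ) (a : ℕ → ℝ)
    (hγ : γ ∈ Set.Ico (0 : ℝ) (1 / 2)) (hσ : 0 < σ) (hc : 0 < c) (hθ : 0 < θ)
    (hβ : β ∈ Set.Ico (0 : ℝ) 1)
    (hΔne : ∀ m : ℕ, Δ m ≠ 0)
    (hA4 : Tendsto (fun m : ℕ => Real.sqrt m * |Δ m|) atTop atTop)
    (hA5 : ∃ M : ℝ, ∀ m : ℕ, |Δ m| ≤ M)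
    (ha : ∀ m : ℕ, 0 < a m ∧
      a m = σ * c * (m : ℝ) ^ ((1 : ℝ) / 2 - γ) * |Δ m|⁻¹ * a m ^ γ + (kstar θ β m : ℝ))
    :
    Tendsto (fun m : ℕ => a m / m) atTop (𝓝 0) :=
  aseq_div_m_tendsto_zero_general σ c θ β γ Δ a hγ hσ hc hθ hβ hA4 ha

end
end

section
/- Under assumptions (A3)–(A5) and γ ∈ [0,1/2), the normalizing sequence satisfies √(a_m(c))·|Δ_m| → ∞ as m → ∞. -/
open MeasureTheory ProbabilityTheory Filter Finset Real Topology

noncomputable section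

/-! Write `u = √m |Δ_m|` and `y = √(a_m) |Δ_m|`. Dropping `k*_m ≥ 0` from the defining equation
of `a_m` and clearing powers of `|Δ_m|` turns it into the homogeneous inequality
`σ c u^(1-2γ) ≤ y^(2(1-γ))`; since `1 - 2γ > 0`, `y → ∞` whenever `u → ∞`, which is (A4). -/

theorem tendsto_atTop_of_mul_rpow_le_rpow {α : Type*} {l : Filter α} {u y : α → ℝ}
    {b r s : ℝ} (hu : Tendsto u l atTop) (hb : 0 < b) (hr : 0 < r) (hs : 0 < s)
    (hle : ∀ᶠ n in l, 0 ≤ y n ∧ b * u n ^ r ≤ y n ^ s) :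
    Tendsto y l atTop := by
  have hys : Tendsto (fun n => y n ^ s) l atTop :=
    tendsto_atTop_mono' l (hle.mono fun _ hn => hn.2)
      (((tendsto_rpow_atTop hr).comp hu).const_mul_atTop hb)
  refine ((tendsto_rpow_atTop (inv_pos.2 hs)).comp hys).congr' ?_
  filter_upwards [hle] with n hn
  exact rpow_rpow_inv hn.1 hs.ne'

theorem mul_rpow_sqrt_mul_le_of_mul_rpow_le_self {b m d x γ : ℝ} (hm : 0 < m) (hd : 0 < d)
    (hx : 0 < x) (h : b * m ^ (1 / 2 - γ) * d⁻¹ * x ^ γ ≤ x) :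
    b * (√m * d) ^ (1 - 2 * γ) ≤ (√x * d) ^ (2 * (1 - γ)) := by
  have hxγ : 0 < x ^ γ := rpow_pos_of_pos hx γ
  have hsplit : x = x ^ (1 - γ) * x ^ γ := by rw [← rpow_add hx]; norm_num
  have hK : b * m ^ (1 / 2 - γ) * d⁻¹ ≤ x ^ (1 - γ) := by
    rw [← mul_le_mul_iff_of_pos_right hxγ, ← hsplit]; exact h
  have hu : (√m * d) ^ (1 - 2 * γ) = m ^ (1 / 2 - γ) * d ^ (1 - 2 * γ) := by
    rw [mul_rpow (sqrt_nonneg _) hd.le, sqrt_eq_rpow, ← rpow_mul hm.le]; ring_nf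
  have hy : (√x * d) ^ (2 * (1 - γ)) = x ^ (1 - γ) * d ^ (2 * (1 - γ)) := by
    rw [mul_rpow (sqrt_nonneg _) hd.le, sqrt_eq_rpow, ← rpow_mul hx.le]; ring_nf
  have hdd : d ^ (1 - 2 * γ) = d⁻¹ * d ^ (2 * (1 - γ)) := by
    rw [← rpow_neg_one, ← rpow_add hd]; ring_nf
  rw [hu, hy, hdd, ← mul_assoc, ← mul_assoc]
  exact mul_le_mul_of_nonneg_right hK (rpow_nonneg hd.le _)

theorem sqrt_aseq_mul_delta_tendsto_top_general
    (σ c θ β γ : ℝ) (Δ : ℕ → ℝ) (a : ℕ → ℝ)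
    (hγ : γ ∈ Set.Ico (0 : ℝ) (1 / 2)) (hσ : 0 < σ) (hc : 0 < c)
    (hA4 : Tendsto (fun m : ℕ => Real.sqrt m * |Δ m|) atTop atTop)
    (ha : ∀ m : ℕ, 0 < a m ∧
      a m = σ * c * (m : ℝ) ^ ((1 : ℝ) / 2 - γ) * |Δ m|⁻¹ * a m ^ γ + (kstar θ β m : ℝ))
    :
    Tendsto (fun m : ℕ => Real.sqrt (a m) * |Δ m|) atTop atTop := by
  refine tendsto_atTop_of_mul_rpow_le_rpow hA4 (mul_pos hσ hc)
    (by linarith [hγ.2] : (0 : ℝ) < 1 - 2 * γ) (by linarith [hγ.2] : (0 : ℝ) < 2 * (1 - γ)) ?_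
  filter_upwards [hA4.eventually_gt_atTop 0] with m hpos
  have hm : (0 : ℝ) < m := sqrt_pos.1 (pos_of_mul_pos_left hpos (abs_nonneg _))
  have hΔ : 0 < |Δ m| := pos_of_mul_pos_right hpos (sqrt_nonneg _)
  obtain ⟨ha0, haeq⟩ := ha m
  have hfix : σ * c * (m : ℝ) ^ ((1 : ℝ) / 2 - γ) * |Δ m|⁻¹ * a m ^ γ ≤ a m := by
    linarith [(Nat.cast_nonneg (kstar θ β m) : (0 : ℝ) ≤ kstar θ β m)]
  exact ⟨by positivity, mul_rpow_sqrt_mul_le_of_mul_rpow_le_self hm hΔ ha0 hfix⟩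

/-- Lemma A.1 a) (ii): `√(a_m(c)) |Δ_m| → ∞`. -/
theorem sqrt_aseq_mul_delta_tendsto_top
    (σ c θ β γ : ℝ) (Δ : ℕ → ℝ) (a : ℕ → ℝ)
    (hγ : γ ∈ Set.Ico (0 : ℝ) (1 / 2)) (hσ : 0 < σ) (hc : 0 < c) (hθ : 0 < θ)
    (hβ : β ∈ Set.Ico (0 : ℝ) 1)
    (hΔne : ∀ m : ℕ, Δ m ≠ 0)
    (hA4 : Tendsto (fun m : ℕ => Real.sqrt m * |Δ m|) atTop atTop)
    (hA5 : ∃ M : ℝ, ∀ m : ℕ, |Δ m| ≤ M)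
    (ha : ∀ m : ℕ, 0 < a m ∧
      a m = σ * c * (m : ℝ) ^ ((1 : ℝ) / 2 - γ) * |Δ m|⁻¹ * a m ^ γ + (kstar θ β m : ℝ))
    :
    Tendsto (fun m : ℕ => Real.sqrt (a m) * |Δ m|) atTop atTop :=
  sqrt_aseq_mul_delta_tendsto_top_general σ c θ β γ Δ a hγ hσ hc hA4 ha

end
end

section
/- Under assumptions (A3)–(A5), γ ∈ [0,1/2), and Δ_m > 0 for all m, for every fixed x ∈ ℝ one has N(m,x)/a_m(c) → 1 as m → ∞. -/
open MeasureTheory ProbabilityTheory Filter Finset Real Topology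

noncomputable section

/-!
Write `D_m = 1 - γ(1 - k*_m/a_m) ≥ 1 - γ`. Dividing the fixed-point equation by `a_m^γ` turns the
base of `N(m,x)` into `a_m^{1-γ}(1 - T_m)` with `T_m = σx(1-γ)/(√a_m Δ_m D_m)`, so
`N(m,x)/a_m = (1 - T_m)^{1/(1-γ)}` once `T_m ≤ 1`, and it remains to show `√a_m Δ_m → ∞`.
Dropping `k*_m ≥ 0` from the fixed-point equation gives
`(√a_m Δ_m)^{2(1-γ)} ≥ σc (√m Δ_m)^{1-2γ}`, which tends to infinity by (A4) since `γ < 1/2`.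
-/

lemma rpow_one_sub_eq_add_div_rpow {a A k γ : ℝ} (ha : 0 < a) (hfix : a = A * a ^ γ + k) :
    a ^ (1 - γ) = A + k / a ^ γ := by
  have := (rpow_pos_of_pos ha γ).ne'
  rw [rpow_sub ha, rpow_one]
  nth_rewrite 1 [hfix]
  field_simp

lemma rpow_one_sub_sub_eq_mul {a γ y E : ℝ} (ha : 0 < a) :
    a ^ (1 - γ) - y * a ^ (1 / 2 - γ) / E = a ^ (1 - γ) * (1 - y / (√a * E)) := by
  have hsplit : a ^ (1 - γ) = a ^ (1 / 2 - γ) * √a := by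
    rw [sqrt_eq_rpow, ← rpow_add ha]
    ring_nf
  have := (sqrt_pos.2 ha).ne'
  rcases eq_or_ne E 0 with rfl | hE
  · simp
  · rw [hsplit]
    field_simp

lemma rpow_one_sub_mul_rpow_inv_div {a γ u : ℝ} (ha : 0 < a) (hγ : γ ≠ 1) (hu : 0 ≤ u) :
    (a ^ (1 - γ) * u) ^ (1 / (1 - γ)) / a = u ^ (1 / (1 - γ)) := by
  rw [mul_rpow (rpow_nonneg ha.le _) hu, ← rpow_mul ha.le,
    mul_one_div_cancel (sub_ne_zero.2 hγ.symm), rpow_one, mul_div_cancel_left₀ _ ha.ne']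

lemma sqrt_mul_rpow {x y : ℝ} (hx : 0 ≤ x) (hy : 0 ≤ y) (p : ℝ) :
    (√x * y) ^ p = x ^ (p / 2) * y ^ p := by
  rw [mul_rpow (sqrt_nonneg x) hy, sqrt_eq_rpow, ← rpow_mul hx]
  ring_nf

lemma mul_sqrt_mul_rpow_le {a Δ t C γ : ℝ} (ha : 0 < a) (hΔ : 0 < Δ) (ht : 0 ≤ t)
    (h : C * t ^ (1 / 2 - γ) * Δ⁻¹ * a ^ γ ≤ a) :
    C * (√t * Δ) ^ (1 - 2 * γ) ≤ (√a * Δ) ^ (2 * (1 - γ)) := by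
  have hbound : C * t ^ (1 / 2 - γ) ≤ a ^ (1 - γ) * Δ := by
    rw [rpow_sub ha, rpow_one, div_mul_eq_mul_div, le_div_iff₀ (rpow_pos_of_pos ha γ)]
    calc C * t ^ (1 / 2 - γ) * a ^ γ = C * t ^ (1 / 2 - γ) * Δ⁻¹ * a ^ γ * Δ := by
          field_simp
      _ ≤ a * Δ := by gcongr
  calc C * (√t * Δ) ^ (1 - 2 * γ) = C * t ^ (1 / 2 - γ) * Δ ^ (1 - 2 * γ) := by
        rw [sqrt_mul_rpow ht hΔ.le]
        ring_nf
    _ ≤ a ^ (1 - γ) * Δ * Δ ^ (1 - 2 * γ) := by gcongr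
    _ = (√a * Δ) ^ (2 * (1 - γ)) := by
        rw [sqrt_mul_rpow ha.le hΔ.le, show 2 * (1 - γ) = 1 + (1 - 2 * γ) by ring,
          rpow_add hΔ, rpow_one]
        ring_nf

lemma tendsto_atTop_of_tendsto_rpow {ι : Type*} {l : Filter ι} {f : ι → ℝ} {p : ℝ}
    (hp : 0 < p) (hf : ∀ i, 0 ≤ f i) (h : Tendsto (fun i => f i ^ p) l atTop) :
    Tendsto f l atTop :=
  ((tendsto_rpow_atTop (inv_pos.2 hp)).comp h).congr fun i => rpow_rpow_inv (hf i) hp.ne'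

lemma tendsto_sqrt_mul_atTop {ι : Type*} {l : Filter ι} {t a Δ : ι → ℝ} {C γ : ℝ}
    (hC : 0 < C) (hγ : γ < 1 / 2) (ht : ∀ i, 0 ≤ t i) (ha : ∀ i, 0 < a i)
    (hΔ : ∀ i, 0 < Δ i) (hle : ∀ i, C * t i ^ (1 / 2 - γ) * (Δ i)⁻¹ * a i ^ γ ≤ a i)
    (htΔ : Tendsto (fun i => √(t i) * Δ i) l atTop) :
    Tendsto (fun i => √(a i) * Δ i) l atTop := by
  have hlower : Tendsto (fun i => C * (√(t i) * Δ i) ^ (1 - 2 * γ)) l atTop :=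
    ((tendsto_rpow_atTop (by linarith)).comp htΔ).const_mul_atTop hC
  refine tendsto_atTop_of_tendsto_rpow (p := 2 * (1 - γ)) (by linarith)
    (fun i => mul_nonneg (sqrt_nonneg _) (hΔ i).le) ?_
  exact tendsto_atTop_mono (fun i => mul_sqrt_mul_rpow_le (ha i) (hΔ i) (ht i) (hle i)) hlower

lemma tendsto_const_div_mul_nhds_zero {ι : Type*} {l : Filter ι} {f D : ι → ℝ} {d : ℝ}
    (y : ℝ) (hd : 0 < d) (hD : ∀ i, d ≤ D i) (hf : Tendsto f l atTop) :
    Tendsto (fun i => y / (f i * D i)) l (𝓝 0) := by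
  have hfD : Tendsto (fun i => f i * D i) l atTop := by
    refine tendsto_atTop_mono' l ?_ (hf.atTop_mul_const hd)
    filter_upwards [hf.eventually_ge_atTop 0] with i hi
    exact mul_le_mul_of_nonneg_left (hD i) hi
  exact hfD.const_div_atTop y

theorem Nseq_div_aseq_tendsto_one_general
    (σ c θ β γ : ℝ) (Δ : ℕ → ℝ) (a : ℕ → ℝ)
    (hγ : γ ∈ Set.Ico (0 : ℝ) (1 / 2)) (hσ : 0 < σ) (hc : 0 < c)
    (hΔpos : ∀ m : ℕ, 0 < Δ m)
    (hA4 : Tendsto (fun m : ℕ => Real.sqrt m * |Δ m|) atTop atTop)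
    (ha : ∀ m : ℕ, 0 < a m ∧
      a m = σ * c * (m : ℝ) ^ ((1 : ℝ) / 2 - γ) * (Δ m)⁻¹ * a m ^ γ + (kstar θ β m : ℝ))
    (x : ℝ) :
    Tendsto (fun m : ℕ => Nseq σ c γ Δ (kstar θ β) a x m / a m) atTop (𝓝 1) := by
  obtain ⟨hγ0, hγ⟩ := hγ
  set k : ℕ → ℝ := fun m => kstar θ β m
  set D : ℕ → ℝ := fun m => 1 - γ * (1 - k m / a m)
  set T : ℕ → ℝ := fun m => σ * x * (1 - γ) / (√(a m) * (Δ m * D m))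
  have hD : ∀ m, 1 - γ ≤ D m := fun m => by
    have : 0 ≤ γ * (k m / a m) := mul_nonneg hγ0 (div_nonneg (Nat.cast_nonneg _) (ha m).1.le)
    linarith
  have hle : ∀ m : ℕ, σ * c * (m : ℝ) ^ (1 / 2 - γ) * (Δ m)⁻¹ * a m ^ γ ≤ a m := fun m => by
    linarith [(ha m).2, (Nat.cast_nonneg _ : 0 ≤ k m)]
  have hT : Tendsto T atTop (𝓝 0) := by
    have hA4' : Tendsto (fun m : ℕ => √(m : ℝ) * Δ m) atTop atTop := by
      simpa only [abs_of_pos (hΔpos _)] using hA4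
    refine (tendsto_const_div_mul_nhds_zero (σ * x * (1 - γ)) (by linarith) hD
      (tendsto_sqrt_mul_atTop (mul_pos hσ hc) hγ (fun m => Nat.cast_nonneg m) (fun m => (ha m).1)
        hΔpos hle hA4')).congr fun m => ?_
    rw [mul_assoc (√(a m))]
  have hN : ∀ m, Nseq σ c γ Δ (kstar θ β) a x m = (a m ^ (1 - γ) * (1 - T m)) ^ (1 / (1 - γ)) :=
    fun m => by
      rw [Nseq, ← rpow_one_sub_eq_add_div_rpow (ha m).1 (by rw [div_eq_mul_inv]; exact (ha m).2),
        mul_right_comm (σ * x), rpow_one_sub_sub_eq_mul (ha m).1]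
  have hlim : Tendsto (fun m => (1 - T m) ^ (1 / (1 - γ))) atTop (𝓝 1) := by
    simpa using (tendsto_const_nhds.sub hT).rpow_const (p := 1 / (1 - γ))
      (Or.inl (by norm_num : (1 : ℝ) - 0 ≠ 0))
  refine hlim.congr' ?_
  filter_upwards [hT.eventually (gt_mem_nhds one_pos)] with m hm
  rw [hN, rpow_one_sub_mul_rpow_inv_div (ha m).1 (by linarith) (by linarith)]

/-- Lemma A.1 b): `N(m,x)/a_m(c) → 1` for every fixed `x`. -/
theorem Nseq_div_aseq_tendsto_one
    (σ c θ β γ : ℝ) (Δ : ℕ → ℝ) (a : ℕ → ℝ)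
    (hγ : γ ∈ Set.Ico (0 : ℝ) (1 / 2)) (hσ : 0 < σ) (hc : 0 < c) (hθ : 0 < θ)
    (hβ : β ∈ Set.Ico (0 : ℝ) 1)
    (hΔpos : ∀ m : ℕ, 0 < Δ m)
    (hA4 : Tendsto (fun m : ℕ => Real.sqrt m * |Δ m|) atTop atTop)
    (hA5 : ∃ M : ℝ, ∀ m : ℕ, |Δ m| ≤ M)
    (ha : ∀ m : ℕ, 0 < a m ∧
      a m = σ * c * (m : ℝ) ^ ((1 : ℝ) / 2 - γ) * (Δ m)⁻¹ * a m ^ γ + (kstar θ β m : ℝ))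
    (x : ℝ) :
    Tendsto (fun m : ℕ => Nseq σ c γ Δ (kstar θ β) a x m / a m) atTop (𝓝 1) :=
  Nseq_div_aseq_tendsto_one_general σ c θ β γ Δ a hγ hσ hc hΔpos hA4 ha x

end
end

section
/- Under assumptions (A3)–(A5), γ ∈ [0,1/2), and Δ_m > 0 for all m, for every fixed x ∈ ℝ one has (1/σ)·(N(m,x)/m)^{γ−1/2}·( σc − Δ_m·m^{γ−1/2}·( N(m,x)^{1−γ} − k*_m/N(m,x)^γ ) ) → x as m → ∞. -/
open MeasureTheory ProbabilityTheory Filter Finset Real Topology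

noncomputable section

/-! Write `ε_m` for `relShift … x m`, `r_m = k*_m / a_m ∈ [0, 1]` and `u_m = Δ_m √a_m`. The
equation defining `a_m` turns the base of `N(m,x)` into `a_m^{1-γ} (1 - ε_m)`, so
`N(m,x) = a_m (1 - ε_m)^{1/(1-γ)}`, and the expression in the limit becomes exactly
`(1 - ε_m)^{(γ-1/2)/(1-γ)} (x + (u_m / σ) r_m R(ε_m))`, where
`R(ε) = (1 - ε)^{-γ/(1-γ)} - 1 - γ ε / (1 - γ)`: the first-order term of `(1 - ε)^{-γ/(1-γ)}`
contributes exactly `x`, because `(1 - γ)(1 + γ r / (1 - γ)) = 1 - γ (1 - r)`.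
The same equation gives `u_m^{2-2γ} ≥ σ c (√m Δ_m)^{1-2γ} → ∞`, so `ε_m = O(1 / u_m) → 0` while
`u_m r_m ε_m` stays bounded; since `R(ε) = o(ε)`, the correction term vanishes. -/

open Asymptotics

lemma isLittleO_one_sub_rpow (p : ℝ) :
    (fun e : ℝ => (1 - e) ^ p - 1 + p * e) =o[𝓝 0] id := by
  have h : HasDerivAt (fun e : ℝ => (1 - e) ^ p) (-p) 0 := by
    simpa using ((hasDerivAt_id (0 : ℝ)).const_sub 1).rpow_const (p := p) (by norm_num)
  refine (hasDerivAt_iff_isLittleO.mp h).congr (fun e => ?_) (fun e => ?_)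
  · simp only [sub_zero, one_rpow, smul_eq_mul]; ring
  · simp

lemma Filter.Tendsto.mul_comp_of_isLittleO {α : Type*} {l : Filter α} {f : ℝ → ℝ}
    (hf : f =o[𝓝 0] id) {u e : α → ℝ} (he : Tendsto e l (𝓝 0))
    (hue : (fun n => u n * e n) =O[l] fun _ => (1 : ℝ)) :
    Tendsto (fun n => u n * f (e n)) l (𝓝 0) :=
  (isLittleO_one_iff ℝ).mp
    (((isBigO_refl u l).mul_isLittleO (hf.comp_tendsto he)).trans_isBigO hue)

lemma rpow_one_sub_eq_of_eq {a B D k γ : ℝ} (ha : 0 < a) (hD : D ≠ 0)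
    (h : a = B * D⁻¹ * a ^ γ + k) : a ^ (1 - γ) = B / D + k / a ^ γ := by
  have haγ : a ^ γ ≠ 0 := (rpow_pos_of_pos ha γ).ne'
  rw [rpow_sub ha, rpow_one]
  nth_rw 1 [h]
  field_simp

lemma rpow_centering_identity {a v m D σ k γ : ℝ} (ha : 0 < a) (hv : 0 < v) (hm : 0 < m) :
    σ⁻¹ * (a * v / m) ^ (γ - 1 / 2) *
      (D * m ^ (γ - 1 / 2) * (a ^ (1 - γ) - k / a ^ γ) -
        D * m ^ (γ - 1 / 2) * ((a * v) ^ (1 - γ) - k / (a * v) ^ γ)) =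
    σ⁻¹ * D * √a * v ^ (γ - 1 / 2) * ((1 - v ^ (1 - γ)) - k / a * (1 - v ^ (-γ))) := by
  have hM : m ^ (γ - 1 / 2) ≠ 0 := (rpow_pos_of_pos hm _).ne'
  have hA : 0 < a ^ (γ - 1 / 2) := rpow_pos_of_pos ha _
  have hQ : 0 < √a := sqrt_pos.mpr ha
  have h1 : a ^ (1 - γ) = √a / a ^ (γ - 1 / 2) := by
    rw [sqrt_eq_rpow, ← rpow_sub ha]; ring_nf
  have h2 : a ^ γ = √a * a ^ (γ - 1 / 2) := by
    rw [sqrt_eq_rpow, ← rpow_add ha]; ring_nf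
  have h3 : a = √a * √a := (mul_self_sqrt ha.le).symm
  rw [div_rpow (by positivity) hm.le, mul_rpow ha.le hv.le, mul_rpow ha.le hv.le,
    mul_rpow ha.le hv.le, rpow_neg hv.le, h1, h2]
  have hvγ : 0 < v ^ γ := rpow_pos_of_pos hv _
  generalize √a = Q at hQ h3 ⊢
  subst h3
  field_simp
  ring

lemma le_mul_sqrt_rpow_of_eq {a B D k m γ : ℝ} (hD : 0 < D) (ha : 0 < a) (hk : 0 ≤ k)
    (hm : 0 ≤ m) (h : a = B * m ^ ((1 : ℝ) / 2 - γ) * D⁻¹ * a ^ γ + k) :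
    B * (√m * D) ^ (1 - 2 * γ) ≤ (D * √a) ^ (2 - 2 * γ) := by
  have hlow : B * m ^ ((1 : ℝ) / 2 - γ) / D ≤ a ^ (1 - γ) := by
    rw [rpow_one_sub_eq_of_eq ha hD.ne' h]
    exact le_add_of_nonneg_right (div_nonneg hk (rpow_nonneg ha.le _))
  have hleft :
      B * (√m * D) ^ (1 - 2 * γ) = D ^ (2 - 2 * γ) * (B * m ^ ((1 : ℝ) / 2 - γ) / D) := by
    rw [mul_rpow (sqrt_nonneg _) hD.le, sqrt_eq_rpow, ← rpow_mul hm,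
      show (2 : ℝ) - 2 * γ = 1 - 2 * γ + 1 by ring, rpow_add hD, rpow_one]
    field_simp
  have hright : (D * √a) ^ (2 - 2 * γ) = D ^ (2 - 2 * γ) * a ^ (1 - γ) := by
    rw [mul_rpow hD.le (sqrt_nonneg _), sqrt_eq_rpow, ← rpow_mul ha.le]
    ring_nf
  rw [hleft, hright]
  exact mul_le_mul_of_nonneg_left hlow (rpow_nonneg hD.le _)

def relShift (σ γ : ℝ) (Δ : ℕ → ℝ) (kst : ℕ → ℕ) (a : ℕ → ℝ) (x : ℝ) (m : ℕ) :
    ℝ :=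
  σ * x * (1 - γ) / (Δ m * √(a m) * (1 - γ * (1 - kst m / a m)))

section relShift

variable {σ c γ x : ℝ} {Δ a : ℕ → ℝ} {kst : ℕ → ℕ} {m : ℕ}

lemma Nseq_eq_mul_rpow (hγ : γ < 1) (hΔ : Δ m ≠ 0) (ha : 0 < a m)
    (hdef : a m = σ * c * (m : ℝ) ^ ((1 : ℝ) / 2 - γ) * (Δ m)⁻¹ * a m ^ γ + kst m)
    (he : relShift σ γ Δ kst a x m ≤ 1) :
    Nseq σ c γ Δ kst a x m = a m * (1 - relShift σ γ Δ kst a x m) ^ (1 / (1 - γ)) := by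
  have hinner : σ * c * (m : ℝ) ^ ((1 : ℝ) / 2 - γ) / Δ m + kst m / a m ^ γ -
      σ * x * a m ^ ((1 : ℝ) / 2 - γ) * (1 - γ) / (Δ m * (1 - γ * (1 - kst m / a m))) =
      a m ^ (1 - γ) * (1 - relShift σ γ Δ kst a x m) := by
    have hsplit : a m ^ (1 - γ) = a m ^ ((1 : ℝ) / 2 - γ) * √(a m) := by
      rw [sqrt_eq_rpow, ← rpow_add ha]; ring_nf
    have hsqrt : √(a m) ≠ 0 := (sqrt_pos.mpr ha).ne'
    rw [← rpow_one_sub_eq_of_eq ha hΔ hdef, relShift, mul_one_sub, hsplit]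
    field_simp
  rw [Nseq, hinner, mul_rpow (rpow_nonneg ha.le _) (sub_nonneg.mpr he), ← rpow_mul ha.le]
  rw [mul_one_div_cancel (sub_ne_zero.mpr hγ.ne'), rpow_one]

lemma Nseq_centering_eq (hσ : σ ≠ 0) (hγ : γ < 1) (hm : 0 < m) (hΔ : Δ m ≠ 0)
    (ha : 0 < a m)
    (hdef : a m = σ * c * (m : ℝ) ^ ((1 : ℝ) / 2 - γ) * (Δ m)⁻¹ * a m ^ γ + kst m)
    (hs : 1 - γ * (1 - kst m / a m) ≠ 0) (he : relShift σ γ Δ kst a x m < 1) :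
    σ⁻¹ * (Nseq σ c γ Δ kst a x m / m) ^ (γ - 1 / 2) *
        (σ * c - Δ m * (m : ℝ) ^ (γ - 1 / 2) *
          (Nseq σ c γ Δ kst a x m ^ (1 - γ) - kst m / Nseq σ c γ Δ kst a x m ^ γ)) =
      (1 - relShift σ γ Δ kst a x m) ^ ((γ - 1 / 2) / (1 - γ)) *
        (x + Δ m * √(a m) / σ * (kst m / a m) *
          ((1 - relShift σ γ Δ kst a x m) ^ (-(γ / (1 - γ))) - 1 +
            -(γ / (1 - γ)) * relShift σ γ Δ kst a x m)) := by
  have hmR : (0 : ℝ) < m := Nat.cast_pos.mpr hm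
  have hγ' : 1 - γ ≠ 0 := sub_ne_zero.mpr hγ.ne'
  have hsc : σ * c = Δ m * (m : ℝ) ^ (γ - 1 / 2) * (a m ^ (1 - γ) - kst m / a m ^ γ) := by
    have hmm : (m : ℝ) ^ (γ - 1 / 2) * (m : ℝ) ^ ((1 : ℝ) / 2 - γ) = 1 := by
      rw [← rpow_add hmR]; norm_num
    rw [rpow_one_sub_eq_of_eq ha hΔ hdef, add_sub_cancel_right, mul_div_assoc',
      eq_div_iff hΔ]
    linear_combination (-(σ * c * Δ m)) * hmm
  have h1e : 0 < 1 - relShift σ γ Δ kst a x m := sub_pos.mpr he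
  rw [Nseq_eq_mul_rpow hγ hΔ ha hdef he.le, hsc,
    rpow_centering_identity ha (rpow_pos_of_pos h1e _) hmR]
  simp only [← rpow_mul h1e.le]
  rw [one_div_mul_cancel hγ', rpow_one]
  generalize hE : relShift σ γ Δ kst a x m = e at *
  rw [show 1 / (1 - γ) * (γ - 1 / 2) = (γ - 1 / 2) / (1 - γ) by ring,
    show 1 / (1 - γ) * -γ = -(γ / (1 - γ)) by ring]
  generalize (1 - e) ^ (-(γ / (1 - γ))) = P
  generalize (1 - e) ^ ((γ - 1 / 2) / (1 - γ)) = W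
  have hsqrt : √(a m) ≠ 0 := (sqrt_pos.mpr ha).ne'
  have hs' : a m - a m * γ + γ * kst m ≠ 0 := by
    contrapose! hs
    field_simp
    linear_combination hs
  rw [← hE, relShift]
  field_simp
  linear_combination (W * a m * σ * x) * mul_inv_cancel₀ hs'

lemma natCast_div_mem_Icc (hσc : 0 ≤ σ * c) (hΔ : 0 < Δ m) (ha : 0 < a m)
    (hdef : a m = σ * c * (m : ℝ) ^ ((1 : ℝ) / 2 - γ) * (Δ m)⁻¹ * a m ^ γ + kst m) :
    (kst m : ℝ) / a m ∈ Set.Icc 0 1 := by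
  refine ⟨div_nonneg (Nat.cast_nonneg _) ha.le, (div_le_one ha).mpr ?_⟩
  nth_rw 1 [hdef]
  exact le_add_of_nonneg_left (mul_nonneg (mul_nonneg (mul_nonneg hσc (rpow_nonneg
    (Nat.cast_nonneg _) _)) (inv_nonneg.mpr hΔ.le)) (rpow_nonneg ha.le _))

lemma abs_relShift_le (hγ0 : 0 ≤ γ) (hγ1 : γ < 1) (hu : 0 < Δ m * √(a m))
    (hr : 0 ≤ (kst m : ℝ) / a m) :
    |relShift σ γ Δ kst a x m| ≤ |σ * x| / (Δ m * √(a m)) := by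
  have hs : 1 - γ ≤ 1 - γ * (1 - kst m / a m) := by nlinarith
  have hγ : 0 < 1 - γ := by linarith
  rw [relShift, abs_div, abs_mul _ (1 - γ), abs_of_pos hγ,
    abs_of_pos (mul_pos hu (hγ.trans_le hs)), div_le_div_iff₀ (mul_pos hu (hγ.trans_le hs)) hu]
  nlinarith [mul_le_mul_of_nonneg_left hs (mul_nonneg (abs_nonneg (σ * x)) hu.le)]

lemma abs_mul_relShift_le (hγ0 : 0 ≤ γ) (hγ1 : γ < 1) (hσ : σ ≠ 0)
    (hu : 0 < Δ m * √(a m))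
    (hr : (kst m : ℝ) / a m ∈ Set.Icc 0 1) :
    |Δ m * √(a m) / σ * (kst m / a m) * relShift σ γ Δ kst a x m| ≤ |x| := by
  have hs : 1 - γ ≤ 1 - γ * (1 - kst m / a m) := by nlinarith [hr.1]
  have hγ : 0 < 1 - γ := by linarith
  have hsp := hγ.trans_le hs
  have heq : Δ m * √(a m) / σ * (kst m / a m) * relShift σ γ Δ kst a x m =
      x * ((1 - γ) * (kst m / a m) / (1 - γ * (1 - kst m / a m))) := by
    rw [relShift]
    field_simp
    rw [mul_assoc, mul_div_mul_left _ _ hu.ne']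
  rw [heq, abs_mul, abs_of_nonneg (div_nonneg (mul_nonneg hγ.le hr.1) hsp.le)]
  refine mul_le_of_le_one_right (abs_nonneg x) ((div_le_one hsp).mpr ?_)
  nlinarith [mul_le_mul_of_nonneg_left hr.2 hγ.le]

lemma tendsto_mul_sqrt_atTop (hσc : 0 < σ * c) (hγ : γ < 1 / 2) (hΔ : ∀ m, 0 < Δ m)
    (ha : ∀ m : ℕ, 0 < a m ∧
      a m = σ * c * (m : ℝ) ^ ((1 : ℝ) / 2 - γ) * (Δ m)⁻¹ * a m ^ γ + kst m)
    (hA4 : Tendsto (fun m : ℕ => √m * |Δ m|) atTop atTop) :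
    Tendsto (fun m => Δ m * √(a m)) atTop atTop := by
  have hA4' : Tendsto (fun m : ℕ => √m * Δ m) atTop atTop :=
    hA4.congr fun m => by rw [abs_of_pos (hΔ m)]
  have hexp : 0 < 2 - 2 * γ := by linarith
  have hlow := ((tendsto_rpow_atTop (by linarith : 0 < 1 - 2 * γ)).comp hA4').const_mul_atTop hσc
  refine tendsto_atTop_mono (fun m => ?_) ((tendsto_rpow_atTop (one_div_pos.mpr hexp)).comp hlow)
  have hu : 0 ≤ Δ m * √(a m) := mul_nonneg (hΔ m).le (sqrt_nonneg _)
  calc (σ * c * (√m * Δ m) ^ (1 - 2 * γ)) ^ (1 / (2 - 2 * γ))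
      ≤ ((Δ m * √(a m)) ^ (2 - 2 * γ)) ^ (1 / (2 - 2 * γ)) :=
        rpow_le_rpow (mul_nonneg hσc.le (rpow_nonneg (mul_nonneg (sqrt_nonneg _) (hΔ m).le) _))
          (le_mul_sqrt_rpow_of_eq (hΔ m) (ha m).1 (Nat.cast_nonneg _) (Nat.cast_nonneg _) (ha m).2)
          (by positivity)
    _ = Δ m * √(a m) := by rw [← rpow_mul hu, mul_one_div_cancel hexp.ne', rpow_one]

lemma tendsto_relShift_zero (hγ0 : 0 ≤ γ) (hγ1 : γ < 1)
    (hu : Tendsto (fun m => Δ m * √(a m)) atTop atTop) (hr : ∀ m, 0 ≤ (kst m : ℝ) / a m) :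
    Tendsto (relShift σ γ Δ kst a x) atTop (𝓝 0) := by
  have hbound : Tendsto (fun m => |σ * x| / (Δ m * √(a m))) atTop (𝓝 0) := by
    simpa only [div_eq_mul_inv, mul_zero, Pi.inv_apply] using
      hu.inv_tendsto_atTop.const_mul |σ * x|
  refine squeeze_zero_norm' ?_ hbound
  filter_upwards [hu.eventually_gt_atTop 0] with m hm
  exact abs_relShift_le hγ0 hγ1 hm (hr m)

end relShift

theorem Nseq_centering_limit_general
    (σ c θ β γ : ℝ) (Δ : ℕ → ℝ) (a : ℕ → ℝ)
    (hγ : γ ∈ Set.Ico (0 : ℝ) (1 / 2)) (hσ : 0 < σ) (hc : 0 < c)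
    (hΔpos : ∀ m : ℕ, 0 < Δ m)
    (hA4 : Tendsto (fun m : ℕ => Real.sqrt m * |Δ m|) atTop atTop)
    (ha : ∀ m : ℕ, 0 < a m ∧
      a m = σ * c * (m : ℝ) ^ ((1 : ℝ) / 2 - γ) * (Δ m)⁻¹ * a m ^ γ + (kstar θ β m : ℝ))
    (x : ℝ) :
    Tendsto (fun m : ℕ =>
        σ⁻¹ * (Nseq σ c γ Δ (kstar θ β) a x m / m) ^ (γ - 1 / 2) *
          (σ * c - Δ m * (m : ℝ) ^ (γ - 1 / 2) *
            (Nseq σ c γ Δ (kstar θ β) a x m ^ (1 - γ) -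
              (kstar θ β m : ℝ) / Nseq σ c γ Δ (kstar θ β) a x m ^ γ)))
      atTop (𝓝 x) := by
  obtain ⟨hγ0, hγ2⟩ := hγ
  have hγ1 : γ < 1 := by linarith
  set e := relShift σ γ Δ (kstar θ β) a x
  have hr m := natCast_div_mem_Icc (mul_pos hσ hc).le (hΔpos m) (ha m).1 (ha m).2
  have hu := tendsto_mul_sqrt_atTop (mul_pos hσ hc) hγ2 hΔpos ha hA4
  have he : Tendsto e atTop (𝓝 0) := tendsto_relShift_zero hγ0 hγ1 hu fun m => (hr m).1
  have hrem := he.mul_comp_of_isLittleO (isLittleO_one_sub_rpow (-(γ / (1 - γ))))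
    (u := fun m => Δ m * √(a m) / σ * (kstar θ β m / a m)) <| .of_bound |x| <|
      (hu.eventually_gt_atTop 0).mono fun m hm => by
        rw [norm_one, mul_one, norm_eq_abs]
        exact abs_mul_relShift_le hγ0 hγ1 hσ.ne' hm (hr m)
  have hW : Tendsto (fun m => (1 - e m) ^ ((γ - 1 / 2) / (1 - γ))) atTop (𝓝 1) := by
    simpa using ((tendsto_const_nhds (x := (1 : ℝ))).sub he).rpow_const (Or.inl (by norm_num))
  have hlim := hW.mul (tendsto_const_nhds (x := x).add hrem)
  rw [one_mul, add_zero] at hlim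
  refine hlim.congr' ?_
  filter_upwards [eventually_gt_atTop 0, he.eventually_lt_const zero_lt_one] with m hm he1
  have hs : 0 < 1 - γ * (1 - kstar θ β m / a m) := by nlinarith [(hr m).1]
  exact (Nseq_centering_eq hσ.ne' hγ1 hm (hΔpos m).ne' (ha m).1 (ha m).2 hs.ne' he1).symm

/-- Lemma A.1 c): the key centering limit for `N(m,x)`. -/
theorem Nseq_centering_limit
    (σ c θ β γ : ℝ) (Δ : ℕ → ℝ) (a : ℕ → ℝ)
    (hγ : γ ∈ Set.Ico (0 : ℝ) (1 / 2)) (hσ : 0 < σ) (hc : 0 < c) (hθ : 0 < θ)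
    (hβ : β ∈ Set.Ico (0 : ℝ) 1)
    (hΔpos : ∀ m : ℕ, 0 < Δ m)
    (hA4 : Tendsto (fun m : ℕ => Real.sqrt m * |Δ m|) atTop atTop)
    (hA5 : ∃ M : ℝ, ∀ m : ℕ, |Δ m| ≤ M)
    (ha : ∀ m : ℕ, 0 < a m ∧
      a m = σ * c * (m : ℝ) ^ ((1 : ℝ) / 2 - γ) * (Δ m)⁻¹ * a m ^ γ + (kstar θ β m : ℝ))
    (x : ℝ) :
    Tendsto (fun m : ℕ =>
        σ⁻¹ * (Nseq σ c γ Δ (kstar θ β) a x m / m) ^ (γ - 1 / 2) *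
          (σ * c - Δ m * (m : ℝ) ^ (γ - 1 / 2) *
            (Nseq σ c γ Δ (kstar θ β) a x m ^ (1 - γ) -
              (kstar θ β m : ℝ) / Nseq σ c γ Δ (kstar θ β) a x m ^ γ)))
      atTop (𝓝 x) :=
  Nseq_centering_limit_general σ c θ β γ Δ a hγ hσ hc hΔpos hA4 ha x

end
end
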